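/- Let n ≥ 3, let Ω ⊆ ℝ^(n+1) be open, and let u : Ω → ℝ be smooth satisfying the second heavenly hierarchy: for all integers 1 ≤ a < b ≤ n−1, u_{a,b+2} − u_{b,a+2} + u_{1,a} u_{2,b} − u_{1,b} u_{2,a} = 0 on Ω (here u_{i,j} = ∂²u/∂x^i∂x^j). For λ ∈ ℝ and 1 ≤ j ≤ n−1 define the vector field on Ω: X_j = ∂_{j+2} + u_{2,j} ∂₁ − u_{1,j} ∂₂ − λ ∂_j. Then for every λ ∈ ℝ and all 1 ≤ a, b ≤ n−1, the Lie bracket [X_a, X_b] vanishes identically on Ω. -/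

import Mathlib

/-- The `i`-th standard coordinate (basis) vector of `ℝᵐ`. -/
noncomputable def e (m : ℕ) (i : Fin m) : Fin m → ℝ := Pi.single i 1

/-- Partial derivative `∂f/∂xⁱ` of a scalar function on `ℝᵐ`. -/
noncomputable def pd (m : ℕ) (f : (Fin m → ℝ) → ℝ) (i : Fin m) (x : Fin m → ℝ) : ℝ :=
  fderiv ℝ f x (e m i)

/-- Second partial derivative `∂²f/∂xⁱ∂xʲ`. -/
noncomputable def pd2 (m : ℕ) (f : (Fin m → ℝ) → ℝ) (i j : Fin m) (x : Fin m → ℝ) : ℝ :=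
  pd m (fun y => pd m f i y) j x

/-- Lie bracket of vector fields on (an open subset of) `ℝᵐ`:
`[X,Y](x) = DY(x)·X(x) − DX(x)·Y(x)`. -/
noncomputable def vbr (m : ℕ) (X Y : (Fin m → ℝ) → (Fin m → ℝ)) (x : Fin m → ℝ) :
    Fin m → ℝ :=
  fderiv ℝ Y x (X x) - fderiv ℝ X x (Y x)

/-!
Each Lax field is `∂_{j+2} − λ∂_j` plus the Hamiltonian field of `u_j` in the `(x¹, x²)`-plane.
The constant parts have zero derivative, so `[X_a, X_b]` has only `∂₁` and `∂₂` components, and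
by the symmetry of third partial derivatives these are `-∂₂E` and `∂₁E`, where `E` is the
left-hand side of the hierarchy equation for `(a, b)`. Since `E` vanishes on the open set `Ω`, so
do its partial derivatives.
-/

open scoped ContDiff

section PartialDerivatives

variable {m : ℕ} {Ω : Set (Fin m → ℝ)} {f g : (Fin m → ℝ) → ℝ} {x : Fin m → ℝ}

lemma pd_eq_zero_of_eqOn_zero (hΩ : IsOpen Ω) (hf : Set.EqOn f 0 Ω) (hx : x ∈ Ω) (k : Fin m) :
    pd m f k x = 0 := by
  rw [pd, (Filter.eventuallyEq_of_mem (hΩ.mem_nhds hx) hf).fderiv_eq]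
  simp

lemma pd_congr_of_eqOn (hΩ : IsOpen Ω) (hfg : Set.EqOn f g Ω) (hx : x ∈ Ω) (k : Fin m) :
    pd m f k x = pd m g k x := by
  rw [pd, pd, (Filter.eventuallyEq_of_mem (hΩ.mem_nhds hx) hfg).fderiv_eq]

lemma contDiffOn_pd (hf : ContDiffOn ℝ ∞ f Ω) (hΩ : IsOpen Ω) (i : Fin m) :
    ContDiffOn ℝ ∞ (pd m f i) Ω :=
  (hf.fderiv_of_isOpen hΩ (by simp)).clm_apply contDiffOn_const

lemma contDiffOn_pd2 (hf : ContDiffOn ℝ ∞ f Ω) (hΩ : IsOpen Ω) (i j : Fin m) :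
    ContDiffOn ℝ ∞ (pd2 m f i j) Ω :=
  contDiffOn_pd (contDiffOn_pd hf hΩ i) hΩ j

lemma differentiableAt_pd2 (hf : ContDiffOn ℝ ∞ f Ω) (hΩ : IsOpen Ω) (hx : x ∈ Ω)
    (i j : Fin m) : DifferentiableAt ℝ (pd2 m f i j) x :=
  ((contDiffOn_pd2 hf hΩ i j).contDiffAt (hΩ.mem_nhds hx)).differentiableAt (by simp)

lemma pd2_comm (hf : ContDiffOn ℝ ∞ f Ω) (hΩ : IsOpen Ω) (hx : x ∈ Ω) (i j : Fin m) :
    pd2 m f i j x = pd2 m f j i x := by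
  have hsymm : IsSymmSndFDerivAt ℝ f x :=
    (hf.contDiffAt (hΩ.mem_nhds hx)).isSymmSndFDerivAt
      (by rw [minSmoothness_of_isRCLikeNormedField]; exact ENat.LEInfty.out)
  have hdiff : DifferentiableAt ℝ (fderiv ℝ f) x :=
    ((hf.fderiv_of_isOpen hΩ (by simp)).contDiffAt (hΩ.mem_nhds hx)).differentiableAt
      (n := ∞) (by simp)
  have hpd2 (v w : Fin m → ℝ) :
      fderiv ℝ (fun y => fderiv ℝ f y v) x w = fderiv ℝ (fderiv ℝ f) x w v := by
    rw [fderiv_clm_apply hdiff (differentiableAt_const v)]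
    simp
  simp only [pd2, pd, hpd2, hsymm (e m j)]

lemma pd_pd2_comm_left (hf : ContDiffOn ℝ ∞ f Ω) (hΩ : IsOpen Ω) (hx : x ∈ Ω) (i j k : Fin m) :
    pd m (pd2 m f i j) k x = pd m (pd2 m f j i) k x :=
  pd_congr_of_eqOn hΩ (fun _ hy => pd2_comm hf hΩ hy i j) hx k

lemma pd_pd2_comm_right (hf : ContDiffOn ℝ ∞ f Ω) (hΩ : IsOpen Ω) (hx : x ∈ Ω) (i j k : Fin m) :
    pd m (pd2 m f i j) k x = pd m (pd2 m f i k) j x :=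
  pd2_comm (contDiffOn_pd hf hΩ i) hΩ hx j k

end PartialDerivatives

lemma vbr_self {m : ℕ} (X : (Fin m → ℝ) → Fin m → ℝ) (x : Fin m → ℝ) : vbr m X X x = 0 :=
  sub_self _

lemma vbr_comm {m : ℕ} (X Y : (Fin m → ℝ) → Fin m → ℝ) (x : Fin m → ℝ) :
    vbr m Y X x = -vbr m X Y x :=
  (neg_sub _ _).symm

section LaxFields

variable {m : ℕ} (u : (Fin m → ℝ) → ℝ) (lam : ℝ) (i₀ i₁ : Fin m)

/- With `i₀, i₁, a, a'` the coordinates `x¹, x², x^j, x^{j+2}`, `laxField` is the paper's `X_j`;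
`heavenlyExpr` is the left-hand side of the hierarchy equation for `(a, b)`. -/
noncomputable def laxField (a a' : Fin m) (y : Fin m → ℝ) : Fin m → ℝ :=
  e m a' + pd2 m u i₁ a y • e m i₀ - pd2 m u i₀ a y • e m i₁ - lam • e m a

noncomputable def heavenlyExpr (a a' b b' : Fin m) : (Fin m → ℝ) → ℝ :=
  pd2 m u a b' - pd2 m u b a' + pd2 m u i₀ a * pd2 m u i₁ b - pd2 m u i₀ b * pd2 m u i₁ a

variable {u i₀ i₁} {Ω : Set (Fin m → ℝ)} {x : Fin m → ℝ}

lemma fderiv_apply_laxField (f : (Fin m → ℝ) → ℝ) (a a' : Fin m) :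
    fderiv ℝ f x (laxField u lam i₀ i₁ a a' x)
      = pd m f a' x + pd2 m u i₁ a x * pd m f i₀ x - pd2 m u i₀ a x * pd m f i₁ x
        - lam * pd m f a x := by
  simp [laxField, pd]

lemma hasFDerivAt_laxField (hu : ContDiffOn ℝ ∞ u Ω) (hΩ : IsOpen Ω) (hx : x ∈ Ω)
    (a a' : Fin m) :
    HasFDerivAt (laxField u lam i₀ i₁ a a')
      ((fderiv ℝ (pd2 m u i₁ a) x).smulRight (e m i₀)
        - (fderiv ℝ (pd2 m u i₀ a) x).smulRight (e m i₁)) x :=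
  ((((differentiableAt_pd2 hu hΩ hx i₁ a).hasFDerivAt.smul_const (e m i₀)).const_add _).sub
    ((differentiableAt_pd2 hu hΩ hx i₀ a).hasFDerivAt.smul_const _)).sub_const _

lemma pd_heavenlyExpr (hu : ContDiffOn ℝ ∞ u Ω) (hΩ : IsOpen Ω) (hx : x ∈ Ω)
    (a a' b b' k : Fin m) :
    pd m (heavenlyExpr u i₀ i₁ a a' b b') k x
      = pd m (pd2 m u a b') k x - pd m (pd2 m u b a') k x
        + (pd m (pd2 m u i₀ a) k x * pd2 m u i₁ b x + pd2 m u i₀ a x * pd m (pd2 m u i₁ b) k x)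
        - (pd m (pd2 m u i₀ b) k x * pd2 m u i₁ a x + pd2 m u i₀ b x * pd m (pd2 m u i₁ a) k x) := by
  have hd := differentiableAt_pd2 hu hΩ hx
  have H := (((hd a b').hasFDerivAt.sub (hd b a').hasFDerivAt).add
    ((hd i₀ a).hasFDerivAt.mul (hd i₁ b).hasFDerivAt)).sub
      ((hd i₀ b).hasFDerivAt.mul (hd i₁ a).hasFDerivAt)
  rw [pd, heavenlyExpr, H.fderiv]
  simp only [pd, sub_apply, add_apply, smul_apply, smul_eq_mul]
  ring

lemma fderiv_pd2_laxField_sub (hu : ContDiffOn ℝ ∞ u Ω) (hΩ : IsOpen Ω) (hx : x ∈ Ω)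
    (a a' b b' k : Fin m) :
    fderiv ℝ (pd2 m u k b) x (laxField u lam i₀ i₁ a a' x)
      - fderiv ℝ (pd2 m u k a) x (laxField u lam i₀ i₁ b b' x)
      = -pd m (heavenlyExpr u i₀ i₁ a a' b b') k x := by
  have s₁₂ := pd_pd2_comm_left hu hΩ hx
  have s₂₃ := pd_pd2_comm_right hu hΩ hx
  have hba' := (s₁₂ k b a').trans (s₂₃ b k a')
  have hab' := (s₁₂ k a b').trans (s₂₃ a k b')
  have hb₀ := (s₂₃ k b i₀).trans ((s₁₂ k i₀ b).trans (s₂₃ i₀ k b))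
  have hb₁ := (s₂₃ k b i₁).trans ((s₁₂ k i₁ b).trans (s₂₃ i₁ k b))
  have ha₀ := (s₂₃ k a i₀).trans ((s₁₂ k i₀ a).trans (s₂₃ i₀ k a))
  have ha₁ := (s₂₃ k a i₁).trans ((s₁₂ k i₁ a).trans (s₂₃ i₁ k a))
  rw [fderiv_apply_laxField, fderiv_apply_laxField, pd_heavenlyExpr hu hΩ hx]
  linear_combination hba' - hab' + pd2 m u i₁ a x * hb₀ - pd2 m u i₀ a x * hb₁
    - pd2 m u i₁ b x * ha₀ + pd2 m u i₀ b x * ha₁ - lam * s₂₃ k b a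

theorem vbr_laxField (hu : ContDiffOn ℝ ∞ u Ω) (hΩ : IsOpen Ω) (hx : x ∈ Ω)
    (a a' b b' : Fin m) :
    vbr m (laxField u lam i₀ i₁ a a') (laxField u lam i₀ i₁ b b') x
      = pd m (heavenlyExpr u i₀ i₁ a a' b b') i₀ x • e m i₁
        - pd m (heavenlyExpr u i₀ i₁ a a' b b') i₁ x • e m i₀ := by
  have h₀ := fderiv_pd2_laxField_sub (i₀ := i₀) (i₁ := i₁) lam hu hΩ hx a a' b b' i₀
  have h₁ := fderiv_pd2_laxField_sub (i₀ := i₀) (i₁ := i₁) lam hu hΩ hx a a' b b' i₁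
  rw [vbr, (hasFDerivAt_laxField lam hu hΩ hx a a').fderiv,
    (hasFDerivAt_laxField lam hu hΩ hx b b').fderiv]
  simp only [sub_apply, ContinuousLinearMap.smulRight_apply]
  linear_combination (norm := module) h₁ • e m i₀ - h₀ • e m i₁

end LaxFields

/-- Coordinates `x¹, …, x^{n+1}` are indexed by `0, …, n`: the 1-based index `i` is
`⟨i−1, _⟩ : Fin (n+1)`. -/
theorem stmt_16 (n : ℕ) (Ω : Set (Fin (n+1) → ℝ)) (hΩ : IsOpen Ω)
    (u : (Fin (n+1) → ℝ) → ℝ) (hu : ContDiffOn ℝ (⊤:ℕ∞) u Ω)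
    (heq : ∀ a b : ℕ, ∀ (ha : 1 ≤ a) (hab : a < b) (hb : b ≤ n - 1), ∀ x ∈ Ω,
      pd2 (n+1) u ⟨a-1, by omega⟩ ⟨b+1, by omega⟩ x
      - pd2 (n+1) u ⟨b-1, by omega⟩ ⟨a+1, by omega⟩ x
      + pd2 (n+1) u ⟨0, by omega⟩ ⟨a-1, by omega⟩ x
        * pd2 (n+1) u ⟨1, by omega⟩ ⟨b-1, by omega⟩ x
      - pd2 (n+1) u ⟨0, by omega⟩ ⟨b-1, by omega⟩ x
        * pd2 (n+1) u ⟨1, by omega⟩ ⟨a-1, by omega⟩ x = 0)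
    (X : ℝ → ℕ → (Fin (n+1) → ℝ) → (Fin (n+1) → ℝ))
    (hX : ∀ (lam : ℝ) (j : ℕ) (hj1 : 1 ≤ j) (hj2 : j ≤ n - 1), ∀ x,
      X lam j x = e (n+1) ⟨j+1, by omega⟩
        + pd2 (n+1) u ⟨1, by omega⟩ ⟨j-1, by omega⟩ x • e (n+1) ⟨0, by omega⟩
        - pd2 (n+1) u ⟨0, by omega⟩ ⟨j-1, by omega⟩ x • e (n+1) ⟨1, by omega⟩
        - lam • e (n+1) ⟨j-1, by omega⟩) :
    ∀ (lam : ℝ) (a b : ℕ), 1 ≤ a → a ≤ n - 1 → 1 ≤ b → b ≤ n - 1 →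
      ∀ x ∈ Ω, vbr (n+1) (X lam a) (X lam b) x = 0 := by
  have hlt : ∀ (lam : ℝ) (a b : ℕ), 1 ≤ a → a < b → b ≤ n - 1 →
      ∀ x ∈ Ω, vbr (n+1) (X lam a) (X lam b) x = 0 := by
    intro lam a b ha hab hb x hx
    let i₀ : Fin (n+1) := ⟨0, by omega⟩
    let i₁ : Fin (n+1) := ⟨1, by omega⟩
    have hXa : X lam a = laxField u lam i₀ i₁ ⟨a-1, by omega⟩ ⟨a+1, by omega⟩ :=
      funext (hX lam a ha (by omega))
    have hXb : X lam b = laxField u lam i₀ i₁ ⟨b-1, by omega⟩ ⟨b+1, by omega⟩ :=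
      funext (hX lam b (by omega) hb)
    have hE : Set.EqOn (heavenlyExpr u i₀ i₁ ⟨a-1, by omega⟩ ⟨a+1, by omega⟩
        ⟨b-1, by omega⟩ ⟨b+1, by omega⟩) 0 Ω := heq a b ha hab hb
    rw [hXa, hXb, vbr_laxField lam hu hΩ hx, pd_eq_zero_of_eqOn_zero hΩ hE hx,
      pd_eq_zero_of_eqOn_zero hΩ hE hx, zero_smul, zero_smul, sub_zero]
  intro lam a b ha ha' hb hb' x hx
  rcases lt_trichotomy a b with hab | rfl | hba
  · exact hlt lam a b ha hab hb' x hx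
  · exact vbr_self _ x
  · rw [vbr_comm, hlt lam b a hb hba ha' x hx, neg_zero]
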